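/- arXiv:2301.05834 — 2 statements merged into one kernel-verified Lean document; each statement's English description precedes it below -/
import Mathlib

section
/- Let T be a perfect tiling subset of G for parameter n. Then the number of elements t ∈ T with t³ = e equals |T* ∩ T^(2)*| + 1; that is, the identity e appears exactly 2β + 1 times in the multiset T^(3) = {t³ : t ∈ T}, where 2β = |T* ∩ T^(2)*|. -/
/-!
Compare the coefficients of a nontrivial `g` on both sides of `T·T = 2·G + T⁽²⁾ + (2n-2)·e`.
The pairs `(e, g)` and `(g, e)` account for the `2`, and the diagonal pairs `(t, t)` for `T⁽²⁾`,
so no nontrivial `g ∈ T` is a product of two distinct nontrivial elements of `T`.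
If a nontrivial `t ∈ T` equals `s²` with `s ∈ T`, then `s = t·s⁻¹` forces `t = s⁻¹`, hence
`s³ = e = t³`; conversely `t³ = e` gives `t = (t⁻¹)²`.
-/

/-- `T` is a perfect tiling subset of `G` for parameter `n`:
`|G| = 2n²+1`, `|T| = 2n+1`, `e ∈ T`, `T = T⁽⁻¹⁾`, and
`T·T = 2·G + T⁽²⁾ + (2n-2)·e` in the integral group ring `ℤ[G]`. -/
def IsPerfectTilingSubset (n : ℕ) {G : Type} [CommGroup G] [Fintype G] [DecidableEq G]
    (T : Finset G) : Prop :=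
  Fintype.card G = 2 * n ^ 2 + 1 ∧
  T.card = 2 * n + 1 ∧
  (1 : G) ∈ T ∧
  T = T.image (·⁻¹) ∧
  (∑ t ∈ T, MonoidAlgebra.single t (1 : ℤ)) * (∑ t ∈ T, MonoidAlgebra.single t (1 : ℤ))
    = 2 * (∑ g : G, MonoidAlgebra.single g (1 : ℤ))
      + (∑ t ∈ T, MonoidAlgebra.single (t ^ 2) (1 : ℤ))
      + MonoidAlgebra.single (1 : G) (2 * (n : ℤ) - 2)

open Finset MonoidAlgebra

section GroupRing

variable {R M ι : Type*} [Semiring R]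

theorem MonoidAlgebra.coeff_sum_single_one [DecidableEq M] (s : Finset ι) (f : ι → M) (m : M) :
    (∑ i ∈ s, single (f i) (1 : R)).coeff m = #{i ∈ s | f i = m} := by
  simp [Finsupp.single_apply, sum_boole]

theorem MonoidAlgebra.sum_single_one_mul_sum_single_one [Mul M] (s t : Finset M) :
    (∑ a ∈ s, single a (1 : R)) * (∑ b ∈ t, single b (1 : R))
      = ∑ p ∈ s ×ˢ t, single (p.1 * p.2) 1 := by
  simp [sum_mul_sum, sum_product]

end GroupRing

theorem IsPerfectTilingSubset.card_mul_eq {n : ℕ} {G : Type} [CommGroup G] [Fintype G]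
    [DecidableEq G] {T : Finset G} (hT : IsPerfectTilingSubset n T) {g : G} (hg : g ≠ 1) :
    #{p ∈ T ×ˢ T | p.1 * p.2 = g} = 2 + #{t ∈ T | t ^ 2 = g} := by
  have h := congrArg (fun x => x.coeff g) hT.2.2.2.2
  simp only [sum_single_one_mul_sum_single_one, coeff_add, Finsupp.add_apply,
    coeff_sum_single_one, two_mul, coeff_single, Finsupp.single_apply, if_neg (Ne.symm hg),
    add_zero, filter_eq', mem_univ, if_true, card_singleton] at h
  omega

theorem eq_of_mul_eq_of_card_le {M : Type*} [Monoid M] [DecidableEq M] {T : Finset M}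
    (h1 : 1 ∈ T) {g : M} (hg : g ∈ T) (hg1 : g ≠ 1)
    (hcard : #{p ∈ T ×ˢ T | p.1 * p.2 = g} ≤ 2 + #{t ∈ T | t ^ 2 = g})
    {a b : M} (ha : a ∈ T) (hb : b ∈ T) (ha1 : a ≠ 1) (hb1 : b ≠ 1) (hab : a * b = g) :
    a = b := by
  by_contra hne
  set D := {t ∈ T | t ^ 2 = g}.image fun t => (t, t)
  have hD : #D = #{t ∈ T | t ^ 2 = g} :=
    card_image_of_injective _ fun s t hst => congrArg Prod.fst hst
  have hsub :
      insert (a, b) (insert (1, g) (insert (g, 1) D)) ⊆ {p ∈ T ×ˢ T | p.1 * p.2 = g} := by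
    intro p hp
    simp only [D, mem_insert, mem_image, mem_filter, mem_product] at hp ⊢
    rcases hp with rfl | rfl | rfl | ⟨t, ⟨ht, ht2⟩, rfl⟩
    all_goals simp_all [sq]
  have hcard' := card_le_card hsub
  rw [card_insert_of_notMem, card_insert_of_notMem, card_insert_of_notMem, hD] at hcard'
  · omega
  all_goals simp [D, Ne.symm hne, ha1, hb1, hg1, hg1.symm]

theorem filter_pow_three_eq_one_eq_insert {G : Type*} [Group G] [DecidableEq G] {T : Finset G}
    (h1 : 1 ∈ T) (hinv : ∀ t ∈ T, t⁻¹ ∈ T)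
    (hmul : ∀ a ∈ T, ∀ b ∈ T, a ≠ 1 → b ≠ 1 → a * b ≠ 1 → a * b ∈ T → a = b) :
    {t ∈ T | t ^ 3 = 1} = insert 1 ((T.erase 1) ∩ ((T.image (· ^ 2)).erase 1)) := by
  ext t
  simp only [mem_filter, mem_insert, mem_inter, mem_erase, mem_image]
  constructor
  · rintro ⟨ht, ht3⟩
    by_cases ht1 : t = 1
    · exact .inl ht1
    · refine .inr ⟨⟨ht1, ht⟩, ht1, t⁻¹, hinv t ht, ?_⟩
      rw [inv_pow, inv_eq_iff_eq_inv, eq_inv_iff_mul_eq_one, ← pow_succ, ht3]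
  · rintro (rfl | ⟨⟨ht1, ht⟩, -, s, hs, hst⟩)
    · exact ⟨h1, one_pow 3⟩
    · have hs1 : s ≠ 1 := by
        rintro rfl
        exact ht1 (hst.symm.trans (one_pow 2))
      have hts : t = s⁻¹ := by
        refine hmul t ht s⁻¹ (hinv s hs) ht1 (inv_ne_one.2 hs1) ?_ ?_ <;>
          rwa [← hst, sq, mul_inv_cancel_right]
      have hs3 : s ^ 3 = 1 := by rw [pow_succ, hst, hts, inv_mul_cancel]
      exact ⟨ht, by rw [hts, inv_pow, hs3, inv_one]⟩

theorem stmt5_general (n : ℕ) {G : Type} [CommGroup G] [Fintype G] [DecidableEq G]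
    (T : Finset G) (hT : IsPerfectTilingSubset n T) :
    (T.filter (fun t => t ^ 3 = 1)).card
      = ((T.erase 1) ∩ ((T.image (· ^ 2)).erase 1)).card + 1 := by
  have h1 : (1 : G) ∈ T := hT.2.2.1
  have hinv : ∀ t ∈ T, t⁻¹ ∈ T := fun t ht => hT.2.2.2.1 ▸ mem_image_of_mem _ ht
  have hmul : ∀ a ∈ T, ∀ b ∈ T, a ≠ 1 → b ≠ 1 → a * b ≠ 1 → a * b ∈ T → a = b :=
    fun a ha b hb ha1 hb1 hab1 hab =>
      eq_of_mul_eq_of_card_le h1 hab hab1 (hT.card_mul_eq hab1).le ha hb ha1 hb1 rfl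
  rw [filter_pow_three_eq_one_eq_insert h1 hinv hmul, card_insert_of_notMem (by simp)]

theorem stmt5 (n : ℕ) (hn : 3 ≤ n) {G : Type} [CommGroup G] [Fintype G] [DecidableEq G]
    (T : Finset G) (hT : IsPerfectTilingSubset n T) :
    (T.filter (fun t => t ^ 3 = 1)).card
      = ((T.erase 1) ∩ ((T.image (· ^ 2)).erase 1)).card + 1 :=
  stmt5_general n T hT
end

section
/- Let n ≥ 3 be an integer with n ≡ 0 (mod 3), and let T be a perfect tiling subset of G for parameter n. Then: (1) the sets Y_i = {g ∈ G : m₄(g) = i} partition G, so Σ_i |Y_i| = 2n² + 1; (2) Σ_{g∈G} m₄(g) = 4n² + 4n + 1; and (3) 2·|{g ∈ G : m₄(g) ≥ 1}| = 2 − |T* ∩ T^(4)*| + Σ_{g ∈ G, m₄(g) ≥ 1} (m₄(g) − 1)(m₄(g) − 2). -/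
/-- `m4 T g`: the number of pairs `(t₁,t₂) ∈ T × T` with `t₁·t₂⁴ = g`,
i.e. the coefficient of `g` in the group-ring product `T·T⁽⁴⁾`. -/
def m4 {G : Type} [CommGroup G] [DecidableEq G] (T : Finset G) (g : G) : ℕ :=
  ((T ×ˢ T).filter (fun p => p.1 * p.2 ^ 4 = g)).card

/-!
Comparing coefficients in `T·T = 2G + T⁽²⁾ + (2n-2)e` shows that `g` has
`r(g) = 2 + [g ∈ T⁽²⁾] + (2n-2)[g = e]` representations `x₁x₂` in `T × T`. As `|G|` is odd,
squaring and fourth powers are bijections of `G`, so `m₄(g)` counts representations in `T·T⁽⁴⁾`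
and `∑ m₄(g)²` is the multiplicative energy `E(T, T⁽⁴⁾)`. Rewriting `a₁b₁ = a₂b₂` as
`a₁/a₂ = b₂/b₁` and using `T = T⁻¹`, this energy is `∑_h r(h⁴) r(h)`, which the formula for `r`
evaluates to `12n² + 12n + |T ∩ T⁽⁴⁾|`. Together with `∑ m₄(g) = |T|²`, expanding
`(m - 1)(m - 2) = m² - 3m + 2` gives (3); the sum may be restricted to `m₄(g) ≥ 1` since `m² - 3m`
vanishes at `0`.
-/

open Finset Function
open scoped Combinatorics.Additive

namespace MonoidAlgebra

variable {R M ι : Type*} [Semiring R] [DecidableEq M]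

lemma coeff_sum_single_one_s13 (s : Finset ι) (f : ι → M) (m : M) :
    (∑ i ∈ s, single (f i) (1 : R)).coeff m = (#{i ∈ s | f i = m} : R) := by
  simp [coeff_sum, coeff_single, Finsupp.single_apply, sum_boole]

lemma coeff_sum_single_one_mul_sum_single_one [Mul M] (s t : Finset M) (m : M) :
    ((∑ a ∈ s, single a (1 : R)) * ∑ b ∈ t, single b 1).coeff m
      = (#{x ∈ s ×ˢ t | x.1 * x.2 = m} : R) := by
  rw [sum_mul_sum, ← sum_product']
  simp only [single_mul_single, one_mul]
  exact coeff_sum_single_one_s13 ..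

end MonoidAlgebra

namespace Finset

variable {α β γ : Type*}

lemma card_filter_apply_eq_of_injective [DecidableEq β] {f : α → β} (hf : Injective f)
    (s : Finset α) (b : β) : #{a ∈ s | f a = b} = if b ∈ s.image f then 1 else 0 := by
  rw [← card_image_of_injective _ hf, ← filter_image (p := (· = b)), filter_eq', apply_ite card,
    card_singleton, card_empty]

lemma card_filter_apply_mem_eq_card_inter_image [DecidableEq α] {f : α → α} (hf : Injective f)
    (s : Finset α) : #{a ∈ s | f a ∈ s} = #(s ∩ s.image f) := by
  rw [inter_comm, ← filter_mem_eq_inter, filter_image, card_image_of_injective _ hf]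

lemma card_filter_mul_apply_eq_card_filter_mul_image [DecidableEq β] [Mul β] {f : α → β}
    (hf : Injective f) (s : Finset β) (t : Finset α) (b : β) :
    #{x ∈ s ×ˢ t | x.1 * f x.2 = b} = #{x ∈ s ×ˢ t.image f | x.1 * x.2 = b} := by
  rw [← image_id (s := s), ← prodMap_image_product, image_id, filter_image,
    card_image_of_injective _ (injective_id.prodMap hf)]
  rfl

lemma card_filter_product_apply_eq_apply [Fintype γ] [DecidableEq γ] (s : Finset α)
    (t : Finset β) (f : α → γ) (g : β → γ) :
    #{p ∈ s ×ˢ t | f p.1 = g p.2} = ∑ c, #{a ∈ s | f a = c} * #{b ∈ t | g b = c} := by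
  rw [card_eq_sum_card_fiberwise (f := fun p => f p.1) (t := univ) fun _ _ => mem_univ _]
  refine sum_congr rfl fun c _ => ?_
  rw [← card_product, filter_filter, ← filter_product]
  congr 1
  ext p
  simp only [mem_filter]
  constructor
  · rintro ⟨hp, h, rfl⟩; exact ⟨hp, rfl, h.symm⟩
  · rintro ⟨hp, rfl, h⟩; exact ⟨hp, h.symm, rfl⟩

lemma card_filter_div_eq_card_filter_mul [Group α] [DecidableEq α] {s : Finset α}
    (hs : ∀ a ∈ s, a⁻¹ ∈ s) (g : α) :
    #{x ∈ s ×ˢ s | x.1 / x.2 = g} = #{x ∈ s ×ˢ s | x.1 * x.2 = g} := by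
  refine card_nbij' (Prod.map id (·⁻¹)) (Prod.map id (·⁻¹)) ?_ ?_
    (fun _ _ => Prod.ext rfl (inv_inv _)) (fun _ _ => Prod.ext rfl (inv_inv _))
  all_goals
    rintro ⟨a, b⟩ hab
    simp only [coe_filter, mem_product, Set.mem_ofPred_eq] at hab ⊢
    exact ⟨⟨hab.1.1, hs b hab.1.2⟩, by simpa [div_eq_mul_inv] using hab.2⟩

lemma card_filter_div_image_eq [Group α] [Group β] [DecidableEq α] [DecidableEq β]
    {φ : α →* β} (hφ : Injective φ) (s : Finset α) (a : α) :
    #{y ∈ s.image φ ×ˢ s.image φ | y.1 / y.2 = φ a} = #{x ∈ s ×ˢ s | x.1 / x.2 = a} := by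
  rw [← prodMap_image_product, filter_image, card_image_of_injective _ (hφ.prodMap hφ)]
  simp only [Prod.map_fst, Prod.map_snd, ← map_div, hφ.eq_iff]

lemma mulEnergy_eq_sum_card_filter_div_mul [CommGroup α] [Fintype α] [DecidableEq α]
    (s t : Finset α) :
    Eₘ[s, t] = ∑ g, #{x ∈ s ×ˢ s | x.1 / x.2 = g} * #{y ∈ t ×ˢ t | y.1 / y.2 = g} := by
  rw [← card_filter_product_apply_eq_apply]
  refine card_equiv ((Equiv.refl _).prodCongr (Equiv.prodComm _ _)) fun x => ?_
  simp only [mem_filter, mem_product, Equiv.prodCongr_apply, Equiv.coe_refl, Prod.map_fst,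
    Prod.map_snd, id, Equiv.prodComm_apply, Prod.fst_swap, Prod.snd_swap,
    div_eq_div_iff_mul_eq_mul]
  rw [mul_comm x.2.2 x.1.2]
  tauto

lemma sum_filter_one_le_sub_one_mul_sub_two [Fintype α] (f : α → ℕ) :
    ∑ x with 1 ≤ f x, ((f x : ℤ) - 1) * ((f x : ℤ) - 2)
      = ∑ x, (f x : ℤ) ^ 2 - 3 * ∑ x, (f x : ℤ) + 2 * #{x | 1 ≤ f x} := by
  have hvanish : ∑ x with 1 ≤ f x, ((f x : ℤ) ^ 2 - 3 * f x) = ∑ x, ((f x : ℤ) ^ 2 - 3 * f x) :=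
    sum_filter_of_ne fun x _ hx => Nat.one_le_iff_ne_zero.mpr fun h => by simp [h] at hx
  calc ∑ x with 1 ≤ f x, ((f x : ℤ) - 1) * ((f x : ℤ) - 2)
      = ∑ x with 1 ≤ f x, (((f x : ℤ) ^ 2 - 3 * f x) + 2) := by congr! 1 with x; ring
    _ = ∑ x, ((f x : ℤ) ^ 2 - 3 * f x) + 2 * #{x | 1 ≤ f x} := by
      rw [sum_add_distrib, hvanish, sum_const, nsmul_eq_mul, mul_comm]
    _ = _ := by rw [sum_sub_distrib, mul_sum]

end Finset

section m4

variable {G : Type} [CommGroup G] [DecidableEq G]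

lemma m4_le_card_sq (T : Finset G) (g : G) : m4 T g ≤ #T ^ 2 := by
  rw [sq, ← card_product]
  exact card_filter_le _ _

variable [Fintype G]

lemma sum_m4_eq_card_sq (T : Finset G) : ∑ g, m4 T g = #T ^ 2 := by
  rw [sq, ← card_product]
  exact (card_eq_sum_card_fiberwise fun _ _ => mem_univ _).symm

lemma sum_m4_sq_eq_sum_card_filter_mul {T : Finset G} (hT : ∀ a ∈ T, a⁻¹ ∈ T)
    (h4 : Bijective (· ^ 4 : G → G)) :
    ∑ g, m4 T g ^ 2
      = ∑ h, #{x ∈ T ×ˢ T | x.1 * x.2 = h ^ 4} * #{x ∈ T ×ˢ T | x.1 * x.2 = h} := by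
  set φ : G →* G := powMonoidHom 4
  have hm4 (g : G) : m4 T g = #{x ∈ T ×ˢ T.image φ | x.1 * x.2 = g} :=
    card_filter_mul_apply_eq_card_filter_mul_image h4.injective T T g
  calc ∑ g, m4 T g ^ 2 = Eₘ[T, T.image φ] := by simp_rw [hm4, mulEnergy_eq_sum_sq]
    _ = ∑ g, #{x ∈ T ×ˢ T | x.1 / x.2 = g}
          * #{y ∈ T.image φ ×ˢ T.image φ | y.1 / y.2 = g} :=
      mulEnergy_eq_sum_card_filter_div_mul ..
    _ = ∑ h, #{x ∈ T ×ˢ T | x.1 / x.2 = φ h}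
          * #{y ∈ T.image φ ×ˢ T.image φ | y.1 / y.2 = φ h} :=
      (Fintype.sum_bijective φ h4 _ _ fun _ => rfl).symm
    _ = _ := by
      simp_rw [card_filter_div_image_eq (φ := φ) h4.injective,
        card_filter_div_eq_card_filter_mul hT]
      rfl

end m4

namespace IsPerfectTilingSubset

variable {n : ℕ} {G : Type} [CommGroup G] [Fintype G] [DecidableEq G] {T : Finset G}

lemma card_univ_eq (hT : IsPerfectTilingSubset n T) : Fintype.card G = 2 * n ^ 2 + 1 := hT.1

lemma card_eq (hT : IsPerfectTilingSubset n T) : #T = 2 * n + 1 := hT.2.1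

lemma one_mem (hT : IsPerfectTilingSubset n T) : (1 : G) ∈ T := hT.2.2.1

lemma inv_mem (hT : IsPerfectTilingSubset n T) {a : G} (ha : a ∈ T) : a⁻¹ ∈ T := by
  rw [hT.2.2.2.1]
  exact mem_image_of_mem _ ha

lemma natCard_coprime_two_pow (hT : IsPerfectTilingSubset n T) (k : ℕ) :
    (Nat.card G).Coprime (2 ^ k) := by
  refine Nat.Coprime.pow_right k ?_
  rw [Nat.card_eq_fintype_card, hT.card_univ_eq, Nat.coprime_two_right]
  exact odd_two_mul_add_one _

lemma sq_bijective (hT : IsPerfectTilingSubset n T) : Bijective (· ^ 2 : G → G) :=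
  (hT.natCard_coprime_two_pow 1).pow_left_bijective

lemma pow_four_bijective (hT : IsPerfectTilingSubset n T) : Bijective (· ^ 4 : G → G) :=
  (hT.natCard_coprime_two_pow 2).pow_left_bijective

lemma card_filter_mul_eq (hT : IsPerfectTilingSubset n T) (g : G) :
    (#{x ∈ T ×ˢ T | x.1 * x.2 = g} : ℤ)
      = 2 + (if g ∈ T.image (· ^ 2) then 1 else 0) + if g = 1 then 2 * (n : ℤ) - 2 else 0 := by
  have hcoeff := congrArg (MonoidAlgebra.coeff · g) hT.2.2.2.2
  rw [MonoidAlgebra.coeff_sum_single_one_mul_sum_single_one] at hcoeff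
  rw [hcoeff, two_mul]
  simp only [MonoidAlgebra.coeff_add, Finsupp.add_apply, MonoidAlgebra.coeff_sum_single_one_s13,
    MonoidAlgebra.coeff_single, Finsupp.single_apply, filter_eq', if_pos (mem_univ g),
    card_singleton, eq_comm (a := (1 : G)),
    card_filter_apply_eq_of_injective hT.sq_bijective.injective]
  push_cast
  ring

lemma card_filter_mul_pow_four_eq (hT : IsPerfectTilingSubset n T) (h : G) :
    (#{x ∈ T ×ˢ T | x.1 * x.2 = h ^ 4} : ℤ)
      = 2 + (if h ^ 2 ∈ T then 1 else 0) + if h = 1 then 2 * (n : ℤ) - 2 else 0 := by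
  simp only [hT.card_filter_mul_eq, hT.pow_four_bijective.injective.eq_iff' (one_pow 4)]
  rw [show h ^ 4 = (h ^ 2) ^ 2 by rw [← pow_mul]]
  simp only [hT.sq_bijective.injective.mem_finset_image]

lemma sum_card_filter_mul_pow_four_mul (hT : IsPerfectTilingSubset n T) :
    ∑ h : G, (#{x ∈ T ×ˢ T | x.1 * x.2 = h ^ 4} : ℤ) * #{x ∈ T ×ˢ T | x.1 * x.2 = h}
      = 12 * n ^ 2 + 12 * n + #{t ∈ T | t ^ 4 ∈ T} := by
  have hsq := hT.sq_bijective
  set A : G → ℤ := fun h => if h ∈ T.image (· ^ 2) then 1 else 0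
  set C : G → ℤ := fun h => if h ^ 2 ∈ T then 1 else 0
  set B : G → ℤ := fun h => if h = 1 then 2 * (n : ℤ) - 2 else 0
  have hr (h : G) : (#{x ∈ T ×ˢ T | x.1 * x.2 = h} : ℤ) = 2 + A h + B h :=
    hT.card_filter_mul_eq h
  have hr4 (h : G) : (#{x ∈ T ×ˢ T | x.1 * x.2 = h ^ 4} : ℤ) = 2 + C h + B h :=
    hT.card_filter_mul_pow_four_eq h
  have hsumA : ∑ h, A h = #T := by
    simp only [A, sum_boole, filter_mem_eq_inter, univ_inter,
      card_image_of_injective _ hsq.injective]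
  have hsumC : ∑ h, C h = #T := by
    rw [Fintype.sum_bijective _ hsq C (fun h => if h ∈ T then 1 else 0) fun _ => rfl,
      sum_boole, filter_mem_eq_inter, univ_inter]
  have hsumAC : ∑ h, A h * C h = #{t ∈ T | t ^ 4 ∈ T} := by
    simp only [A, C, ite_zero_mul_ite_zero, mul_one, sum_boole, ← filter_filter,
      filter_mem_eq_inter, univ_inter, filter_image, card_image_of_injective _ hsq.injective,
      ← pow_mul]
  have hsumB (f : G → ℤ) : ∑ h, B h * f h = (2 * n - 2) * f 1 := by
    simp only [B, ite_mul, zero_mul, sum_ite_eq', mem_univ, if_true]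
  have hA1 : A 1 = 1 := if_pos (mem_image.mpr ⟨1, hT.one_mem, one_pow 2⟩)
  have hC1 : C 1 = 1 := if_pos (by rw [one_pow]; exact hT.one_mem)
  have hB1 : B 1 = 2 * n - 2 := if_pos rfl
  calc ∑ h : G, (#{x ∈ T ×ˢ T | x.1 * x.2 = h ^ 4} : ℤ) * #{x ∈ T ×ˢ T | x.1 * x.2 = h}
      = ∑ h, (4 + 2 * A h + 2 * C h + A h * C h + B h * (4 + A h + C h + B h)) := by
        simp_rw [hr4, hr]
        congr! 1 with h
        ring
    _ = 4 * Fintype.card G + 2 * #T + 2 * #T + #{t ∈ T | t ^ 4 ∈ T}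
          + (2 * n - 2) * (4 + 1 + 1 + (2 * n - 2)) := by
        simp only [sum_add_distrib, ← mul_sum, hsumA, hsumC, hsumAC, hsumB, hA1, hC1, hB1,
          sum_const, card_univ, nsmul_eq_mul]
        ring
    _ = _ := by rw [hT.card_univ_eq, hT.card_eq]; push_cast; ring

lemma sum_m4_sq (hT : IsPerfectTilingSubset n T) :
    ∑ g, (m4 T g : ℤ) ^ 2 = 12 * n ^ 2 + 12 * n + #{t ∈ T | t ^ 4 ∈ T} := by
  rw [← hT.sum_card_filter_mul_pow_four_mul]
  exact_mod_cast sum_m4_sq_eq_sum_card_filter_mul (fun _ => hT.inv_mem)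
    hT.pow_four_bijective

lemma card_erase_one_inter_erase_one (hT : IsPerfectTilingSubset n T) :
    (#(T.erase 1 ∩ (T.image (· ^ 4)).erase 1) : ℤ) = #{t ∈ T | t ^ 4 ∈ T} - 1 := by
  have hone : (1 : G) ∈ T ∩ T.image (· ^ 4) :=
    mem_inter.mpr ⟨hT.one_mem, mem_image.mpr ⟨1, hT.one_mem, one_pow 4⟩⟩
  rw [erase_inter, inter_erase, erase_idem, card_erase_of_mem hone,
    ← card_filter_apply_mem_eq_card_inter_image hT.pow_four_bijective.injective,
    Nat.cast_sub (card_pos.mpr ⟨1, ?_⟩), Nat.cast_one]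
  exact mem_filter.mpr ⟨hT.one_mem, by rw [one_pow]; exact hT.one_mem⟩

end IsPerfectTilingSubset

theorem stmt13_general (n : ℕ)
    {G : Type} [CommGroup G] [Fintype G] [DecidableEq G]
    (T : Finset G) (hT : IsPerfectTilingSubset n T) :
    (∑ i ∈ Finset.range (4 * n ^ 2 + 4 * n + 2),
        (Finset.univ.filter (fun g : G => m4 T g = i)).card) = 2 * n ^ 2 + 1 ∧
    (∑ g : G, m4 T g) = 4 * n ^ 2 + 4 * n + 1 ∧
    (2 : ℤ) * ((Finset.univ.filter (fun g : G => 1 ≤ m4 T g)).card)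
      = 2 - (((T.erase 1) ∩ ((T.image (· ^ 4)).erase 1)).card : ℤ)
        + ∑ g ∈ Finset.univ.filter (fun g : G => 1 ≤ m4 T g),
            ((m4 T g : ℤ) - 1) * ((m4 T g : ℤ) - 2) := by
  have hsum : ∑ g, m4 T g = 4 * n ^ 2 + 4 * n + 1 := by
    rw [sum_m4_eq_card_sq, hT.card_eq]; ring
  refine ⟨?_, hsum, ?_⟩
  · rw [← hT.card_univ_eq, ← card_univ]
    refine (card_eq_sum_card_fiberwise fun g _ => mem_range.mpr ?_).symm
    have hle := m4_le_card_sq T g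
    rw [hT.card_eq] at hle
    nlinarith
  · have hsum' : ∑ g, (m4 T g : ℤ) = 4 * n ^ 2 + 4 * n + 1 := by exact_mod_cast hsum
    rw [sum_filter_one_le_sub_one_mul_sub_two, hT.sum_m4_sq, hsum',
      hT.card_erase_one_inter_erase_one]
    ring

theorem stmt13 (n : ℕ) (hn : 3 ≤ n) (hmod : n % 3 = 0)
    {G : Type} [CommGroup G] [Fintype G] [DecidableEq G]
    (T : Finset G) (hT : IsPerfectTilingSubset n T) :
    (∑ i ∈ Finset.range (4 * n ^ 2 + 4 * n + 2),
        (Finset.univ.filter (fun g : G => m4 T g = i)).card) = 2 * n ^ 2 + 1 ∧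
    (∑ g : G, m4 T g) = 4 * n ^ 2 + 4 * n + 1 ∧
    (2 : ℤ) * ((Finset.univ.filter (fun g : G => 1 ≤ m4 T g)).card)
      = 2 - (((T.erase 1) ∩ ((T.image (· ^ 4)).erase 1)).card : ℤ)
        + ∑ g ∈ Finset.univ.filter (fun g : G => 1 ≤ m4 T g),
            ((m4 T g : ℤ) - 1) * ((m4 T g : ℤ) - 2) :=
  stmt13_general n T hT
end
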